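/- Let R₁, ..., R_m be independent real-valued random variables and q* ∈ ℝ such that P(Rᵢ ≤ q*) = 1 - αᵢ* with αᵢ* ≥ 0 summing to α > 0 and each αᵢ* ≤ 1. Then P(max(R₁,...,R_m) ≤ q*) < 1 - α + α²/2, and hence q* ≤ quantile(max(R₁,...,R_m), 1 - α + α²/2). -/

import Mathlib

/-!
By independence, `P(max Rᵢ ≤ q*) = ∏ (1 - αᵢ*)`, and `∏ (1 - aᵢ) < 1 - α + α²/2` is the
second-order Bonferroni inequality: multiplying `1 - s + s²/2` by `1 - x` loses exactly
`x (x + s²) / 2` against `1 - (s + x) + (s + x)²/2`. The quantile bound then holds because the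
distribution function of the maximum is monotone and tends to `1 > 1 - α + α²/2`.
-/

open MeasureTheory ProbabilityTheory Filter Topology

section Bonferroni

lemma one_sub_add_sq_half_mul_one_sub_le (s : ℝ) {x : ℝ} (hx : 0 ≤ x) :
    (1 - s + s ^ 2 / 2) * (1 - x) ≤ 1 - (s + x) + (s + x) ^ 2 / 2 := by
  nlinarith [mul_nonneg hx (add_nonneg hx (sq_nonneg s))]

lemma one_sub_add_sq_half_mul_one_sub_lt (s : ℝ) {x : ℝ} (hx : 0 < x) :
    (1 - s + s ^ 2 / 2) * (1 - x) < 1 - (s + x) + (s + x) ^ 2 / 2 := by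
  nlinarith [mul_pos hx (add_pos_of_pos_of_nonneg hx (sq_nonneg s))]

variable {ι : Type*} {a : ι → ℝ}

lemma Finset.prod_one_sub_le (s : Finset ι) (h0 : ∀ i ∈ s, 0 ≤ a i) (h1 : ∀ i ∈ s, a i ≤ 1) :
    ∏ i ∈ s, (1 - a i) ≤ 1 - ∑ i ∈ s, a i + (∑ i ∈ s, a i) ^ 2 / 2 := by
  classical
  induction s using Finset.induction_on with
  | empty => simp
  | insert x s hx ih =>
    rw [Finset.prod_insert hx, Finset.sum_insert hx, add_comm (a x), mul_comm]
    have hs := ih (fun i hi ↦ h0 i (Finset.mem_insert_of_mem hi))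
      (fun i hi ↦ h1 i (Finset.mem_insert_of_mem hi))
    calc (∏ i ∈ s, (1 - a i)) * (1 - a x)
        ≤ (1 - ∑ i ∈ s, a i + (∑ i ∈ s, a i) ^ 2 / 2) * (1 - a x) :=
          mul_le_mul_of_nonneg_right hs (sub_nonneg.2 (h1 x (Finset.mem_insert_self x s)))
      _ ≤ _ := one_sub_add_sq_half_mul_one_sub_le _ (h0 x (Finset.mem_insert_self x s))

lemma Finset.prod_one_sub_lt (s : Finset ι) (h0 : ∀ i ∈ s, 0 ≤ a i) (h1 : ∀ i ∈ s, a i ≤ 1)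
    (hpos : 0 < ∑ i ∈ s, a i) :
    ∏ i ∈ s, (1 - a i) < 1 - ∑ i ∈ s, a i + (∑ i ∈ s, a i) ^ 2 / 2 := by
  classical
  obtain ⟨j, hj, hja⟩ : ∃ j ∈ s, 0 < a j :=
    Finset.exists_lt_of_sum_lt (by simpa using hpos)
  rw [← Finset.prod_erase_mul _ _ hj, ← Finset.sum_erase_add _ _ hj]
  have hrest := (s.erase j).prod_one_sub_le (fun i hi ↦ h0 i (Finset.mem_of_mem_erase hi))
    (fun i hi ↦ h1 i (Finset.mem_of_mem_erase hi))
  calc (∏ i ∈ s.erase j, (1 - a i)) * (1 - a j)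
      ≤ (1 - ∑ i ∈ s.erase j, a i + (∑ i ∈ s.erase j, a i) ^ 2 / 2) * (1 - a j) :=
        mul_le_mul_of_nonneg_right hrest (sub_nonneg.2 (h1 j hj))
    _ < _ := one_sub_add_sq_half_mul_one_sub_lt _ hja

end Bonferroni

section Quantile

variable {Ω : Type*} [MeasurableSpace Ω] (μ : Measure Ω)

noncomputable def quantile (X : Ω → ℝ) (β : ℝ) : ℝ :=
  sInf {q : ℝ | β ≤ (μ {ω | X ω ≤ q}).toReal}

lemma tendsto_measure_setOf_le_atTop (X : Ω → ℝ) :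
    Tendsto (fun q : ℝ ↦ μ {ω | X ω ≤ q}) atTop (𝓝 (μ Set.univ)) := by
  have hmono : Monotone fun q : ℝ ↦ {ω | X ω ≤ q} :=
    fun _ _ hqr _ hω ↦ le_trans hω hqr
  have hunion : ⋃ q : ℝ, {ω | X ω ≤ q} = Set.univ :=
    Set.eq_univ_of_forall fun ω ↦ Set.mem_iUnion.2 ⟨X ω, le_refl (X ω)⟩
  rw [← hunion]
  exact tendsto_measure_iUnion_atTop hmono

lemma le_quantile_of_measure_lt [IsProbabilityMeasure μ] {X : Ω → ℝ} {β x : ℝ} (hβ : β < 1)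
    (hx : (μ {ω | X ω ≤ x}).toReal < β) : x ≤ quantile μ X β := by
  have hlim : Tendsto (fun q : ℝ ↦ (μ {ω | X ω ≤ q}).toReal) atTop (𝓝 1) := by
    have h := tendsto_measure_setOf_le_atTop μ X
    rw [measure_univ] at h
    exact (ENNReal.tendsto_toReal ENNReal.one_ne_top).comp h
  obtain ⟨q, hq⟩ := (hlim.eventually (eventually_ge_nhds hβ)).exists
  refine le_csInf ⟨q, hq⟩ fun r hr ↦ le_of_not_gt fun hrx ↦ ?_
  have hmono : (μ {ω | X ω ≤ r}).toReal ≤ (μ {ω | X ω ≤ x}).toReal :=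
    ENNReal.toReal_mono (measure_ne_top μ _) (measure_mono fun _ hω ↦ le_trans hω hrx.le)
  exact hx.not_ge (hr.trans hmono)

end Quantile

lemma ProbabilityTheory.iIndepFun.measure_sup'_le_toReal_eq_prod {Ω ι : Type*}
    [MeasurableSpace Ω] {μ : Measure Ω} [Fintype ι] [Nonempty ι]
    {R : ι → Ω → ℝ} (hindep : iIndepFun R μ) (q : ℝ) :
    (μ {ω | Finset.univ.sup' Finset.univ_nonempty (fun i ↦ R i ω) ≤ q}).toReal =
      ∏ i, (μ {ω | R i ω ≤ q}).toReal := by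
  have hset : {ω | Finset.univ.sup' Finset.univ_nonempty (fun i ↦ R i ω) ≤ q} =
      ⋂ i, {ω | R i ω ≤ q} := by
    ext ω
    simp [Finset.sup'_le_iff]
  rw [hset, ← ENNReal.toReal_prod]
  exact congrArg ENNReal.toReal (hindep.meas_iInter fun i ↦ ⟨Set.Iic q, measurableSet_Iic, rfl⟩)

theorem equalized_allocation_suboptimality_general {Ω : Type*} [MeasurableSpace Ω]
    (μ : Measure Ω) [IsProbabilityMeasure μ]
    {ι : Type*} [Fintype ι] [Nonempty ι]
    (R : ι → Ω → ℝ)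
    (hindep : iIndepFun R μ)
    (qstar : ℝ) (a : ι → ℝ) (α : ℝ)
    (ha0 : ∀ i, 0 ≤ a i) (ha1 : ∀ i, a i ≤ 1)
    (hsum : ∑ i, a i = α) (hα : 0 < α) (hα1 : α < 1)
    (hq : ∀ i, (μ {ω | R i ω ≤ qstar}).toReal = 1 - a i) :
    (μ {ω | Finset.univ.sup' Finset.univ_nonempty (fun i => R i ω) ≤ qstar}).toReal <
        1 - α + α ^ 2 / 2 ∧
      qstar ≤ sInf {q : ℝ | 1 - α + α ^ 2 / 2 ≤
        (μ {ω | Finset.univ.sup' Finset.univ_nonempty (fun i => R i ω) ≤ q}).toReal} := by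
  have hmax : (μ {ω | Finset.univ.sup' Finset.univ_nonempty (fun i => R i ω) ≤ qstar}).toReal <
      1 - α + α ^ 2 / 2 := by
    rw [hindep.measure_sup'_le_toReal_eq_prod, Finset.prod_congr rfl fun i _ ↦ hq i, ← hsum]
    exact Finset.univ.prod_one_sub_lt (fun i _ ↦ ha0 i) (fun i _ ↦ ha1 i) (hsum ▸ hα)
  exact ⟨hmax, le_quantile_of_measure_lt μ (by nlinarith) hmax⟩

theorem equalized_allocation_suboptimality {Ω : Type*} [MeasurableSpace Ω]
    (μ : Measure Ω) [IsProbabilityMeasure μ]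
    {ι : Type*} [Fintype ι] [Nonempty ι]
    (R : ι → Ω → ℝ) (hmeas : ∀ i, Measurable (R i))
    (hindep : iIndepFun R μ)
    (qstar : ℝ) (a : ι → ℝ) (α : ℝ)
    (ha0 : ∀ i, 0 ≤ a i) (ha1 : ∀ i, a i ≤ 1)
    (hsum : ∑ i, a i = α) (hα : 0 < α) (hα1 : α < 1)
    (hq : ∀ i, (μ {ω | R i ω ≤ qstar}).toReal = 1 - a i) :
    (μ {ω | Finset.univ.sup' Finset.univ_nonempty (fun i => R i ω) ≤ qstar}).toReal <
        1 - α + α ^ 2 / 2 ∧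
      qstar ≤ sInf {q : ℝ | 1 - α + α ^ 2 / 2 ≤
        (μ {ω | Finset.univ.sup' Finset.univ_nonempty (fun i => R i ω) ≤ q}).toReal} :=
  equalized_allocation_suboptimality_general μ R hindep qstar a α ha0 ha1 hsum hα hα1 hq
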